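/- For a positive integer b, let s_1, s_2 : ℤ² → ℤ² be the linear maps given by the matrices s_1 = [[-1, b],[0,1]] and s_2 = [[1,0],[b,-1]], and let σ swap the two coordinates. Let S_n(x) be normalized Chebyshev polynomials of the second kind, and define α(n+3) = (S_n(b), S_{n-1}(b)) and α(-n) = (S_{n-1}(b), S_n(b)) for n ≥ 0. Then for all n ≥ 0: s_1 α(-n) = α(n+4) = σ α(-n-1) and s_2 α(n+3) = α(-n-1) = σ α(n+4). -/
import Mathlib


/-- The simple reflection `s₁ = [[-1, b],[0,1]]` acting on `ℤ²`. -/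
def refl1 (b : ℤ) (v : ℤ × ℤ) : ℤ × ℤ := (-v.1 + b * v.2, v.2)

/-- The simple reflection `s₂ = [[1,0],[b,-1]]` acting on `ℤ²`. -/
def refl2 (b : ℤ) (v : ℤ × ℤ) : ℤ × ℤ := (v.1, b * v.1 - v.2)

/-- For `b ≥ 1`, with `S_n` the normalized Chebyshev polynomials of the second kind and
`α(n+3) = (S_n(b), S_{n-1}(b))`, `α(-n) = (S_{n-1}(b), S_n(b))` for `n ≥ 0`, one has
`s₁ α(-n) = α(n+4) = σ α(-n-1)` and `s₂ α(n+3) = α(-n-1) = σ α(n+4)`, where `σ` swaps the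
two coordinates. -/
theorem stmt13 (b : ℤ) (hb : 1 ≤ b)
    (S : ℤ → Polynomial ℤ) (hm1 : S (-1) = 0) (h0 : S 0 = 1)
    (hrec : ∀ n : ℤ, 0 ≤ n → S (n + 1) = Polynomial.X * S n - S (n - 1))
    (α : ℤ → ℤ × ℤ)
    (hα1 : ∀ n : ℕ, α ((n : ℤ) + 3) = ((S n).eval b, (S ((n : ℤ) - 1)).eval b))
    (hα2 : ∀ n : ℕ, α (-(n : ℤ)) = ((S ((n : ℤ) - 1)).eval b, (S n).eval b)) :
    ∀ n : ℕ,
      refl1 b (α (-(n : ℤ))) = α ((n : ℤ) + 4) ∧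
      α ((n : ℤ) + 4) = Prod.swap (α (-(n : ℤ) - 1)) ∧
      refl2 b (α ((n : ℤ) + 3)) = α (-(n : ℤ) - 1) ∧
      α (-(n : ℤ) - 1) = Prod.swap (α ((n : ℤ) + 4)) := by
  intro n
  have h4 : α ((n : ℤ) + 4) = ((S ((n : ℤ) + 1)).eval b, (S n).eval b) := by
    have := hα1 (n + 1)
    push_cast at this
    rw [show (n : ℤ) + 4 = (n : ℤ) + 1 + 3 by ring, this]
    norm_num
  have hm : α (-(n : ℤ) - 1) = ((S n).eval b, (S ((n : ℤ) + 1)).eval b) := by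
    have := hα2 (n + 1)
    push_cast at this
    rw [show -(n : ℤ) - 1 = -((n : ℤ) + 1) by ring, this]
    norm_num
  have hr : (S ((n : ℤ) + 1)).eval b = b * (S n).eval b - (S ((n : ℤ) - 1)).eval b := by
    rw [hrec n (by positivity)]
    simp
  refine ⟨?_, ?_, ?_, ?_⟩
  · rw [hα2 n, h4, refl1]
    simp [hr]
    ring
  · rw [h4, hm]; rfl
  · rw [hα1 n, hm, refl2]
    simp [hr]
  · rw [hm, h4]; rfl
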